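/- Let R be an associative ring such that for every x ∈ R there exists an idempotent g ∈ R with x ∈ gRg. Then for every n ≥ 3, the additive subgroup [R,...,R]_n generated by all n-generalized commutators equals the two-sided ideal of R generated by all commutators. -/

import Mathlib

def lprod {R : Type*} [NonUnitalRing R] : List R → R
  | [] => 0
  | a :: l => l.foldl (· * ·) a

section aux

variable {R : Type*} [NonUnitalRing R]

lemma lprod_cons (a : R) {l : List R} (h : l ≠ []) : lprod (a :: l) = a * lprod l := by
  obtain ⟨b, m, rfl⟩ := List.exists_cons_of_ne_nil h
  show (b :: m).foldl (· * ·) a = a * m.foldl (· * ·) b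
  rw [List.foldl_cons]
  exact List.foldl_assoc

lemma lprod_append_singleton {l : List R} (h : l ≠ []) (a : R) :
    lprod (l ++ [a]) = lprod l * a := by
  obtain ⟨b, m, rfl⟩ := List.exists_cons_of_ne_nil h
  show (m ++ [a]).foldl (· * ·) b = m.foldl (· * ·) b * a
  rw [List.foldl_append]
  rfl

lemma foldl_replicate_absorb {g : R} (k : ℕ) (s : R) (h : s * g = s) :
    (List.replicate k g).foldl (· * ·) s = s := by
  induction k with
  | zero => rfl
  | succ k ih => rw [List.replicate_succ, List.foldl_cons]; show (List.replicate k g).foldl (· * ·) (s * g) = s; rw [h, ih]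

lemma lprod_rep_cvu {g : R} (hg : g * g = g) {c : R} (hgc : g * c = c) (k : ℕ) (v u : R) :
    lprod (List.replicate k g ++ [c, v, u]) = c * v * u := by
  cases k with
  | zero => rfl
  | succ k =>
    show ((List.replicate k g) ++ [c, v, u]).foldl (· * ·) g = c * v * u
    rw [List.foldl_append, foldl_replicate_absorb k g hg]
    show g * c * v * u = c * v * u
    rw [hgc]

/-- the key membership: if `g` is an idempotent absorbing `c`, then `u*v*c - c*v*u` is an
`n`-generalized commutator. -/
lemma key_mem {n : ℕ} (hn : 3 ≤ n) (g c : R) (hg : g * g = g) (hgc : g * c = c)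
    (hcg : c * g = c) (u v : R) :
    u * v * c - c * v * u ∈ AddSubgroup.closure
      {x : R | ∃ l : List R, l.length = n ∧ x = lprod l - lprod l.reverse} := by
  apply AddSubgroup.subset_closure
  refine ⟨u :: v :: c :: List.replicate (n - 3) g, ?_, ?_⟩
  · simp only [List.length_cons, List.length_replicate]; omega
  · have h1 : lprod (u :: v :: c :: List.replicate (n - 3) g) = u * v * c := by
      show (v :: c :: List.replicate (n - 3) g).foldl (· * ·) u = u * v * c
      rw [List.foldl_cons, List.foldl_cons]
      exact foldl_replicate_absorb _ _ (by rw [mul_assoc, hcg])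
    have h2 : (u :: v :: c :: List.replicate (n - 3) g).reverse
        = List.replicate (n - 3) g ++ [c, v, u] := by
      simp
    rw [h1, h2, lprod_rep_cvu hg hgc]

lemma mem_span_list (l : List R) :
    lprod l - lprod l.reverse ∈ TwoSidedIdeal.span {x : R | ∃ a b : R, x = a * b - b * a} := by
  induction l with
  | nil => simpa using TwoSidedIdeal.zero_mem _
  | cons a t ih =>
    rcases t with _ | ⟨b, m⟩
    · simpa using TwoSidedIdeal.zero_mem _
    · have h1 : lprod (a :: b :: m) = a * lprod (b :: m) := lprod_cons a (by simp)
      have h2 : lprod ((a :: b :: m).reverse) = lprod (b :: m).reverse * a := by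
        rw [List.reverse_cons]
        exact lprod_append_singleton (by simp) a
      rw [h1, h2]
      have key : a * lprod (b :: m) - lprod (b :: m).reverse * a
          = a * (lprod (b :: m) - lprod (b :: m).reverse)
            + (a * lprod (b :: m).reverse - lprod (b :: m).reverse * a) := by
        noncomm_ring
      rw [key]
      refine TwoSidedIdeal.add_mem _ (TwoSidedIdeal.mul_mem_left _ _ _ ih) ?_
      exact TwoSidedIdeal.subset_span ⟨a, lprod (b :: m).reverse, rfl⟩

end aux

theorem stmt_11 {R : Type*} [NonUnitalRing R]
    (hsharp : ∀ x : R, ∃ g : R, g * g = g ∧ ∃ r : R, x = g * r * g)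
    (n : ℕ) (hn : 3 ≤ n) :
    (↑(AddSubgroup.closure
        {x : R | ∃ l : List R, l.length = n ∧ x = lprod l - lprod l.reverse}) : Set R) =
      (TwoSidedIdeal.span {x : R | ∃ a b : R, x = a * b - b * a} : Set R) := by
  set Sn : Set R := {x : R | ∃ l : List R, l.length = n ∧ x = lprod l - lprod l.reverse} with hSn
  set Sc : Set R := {x : R | ∃ a b : R, x = a * b - b * a} with hSc
  set G : AddSubgroup R := AddSubgroup.closure Sn with hG
  set I : TwoSidedIdeal R := TwoSidedIdeal.span Sc with hI
  -- absorbing idempotents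
  have absorb : ∀ c : R, ∃ g : R, g * g = g ∧ g * c = c ∧ c * g = g * c := by
    intro c
    obtain ⟨g, hg, r, rfl⟩ := hsharp c
    refine ⟨g, hg, ?_, ?_⟩
    · show g * (g * r * g) = g * r * g
      rw [show g * (g * r * g) = g * g * r * g by noncomm_ring, hg]
    · show (g * r * g) * g = g * (g * r * g)
      rw [mul_assoc (g * r) g g, hg, show g * (g * r * g) = g * g * r * g by noncomm_ring, hg]
  -- key membership lemmas in G
  have Fkey : ∀ c : R, ∀ u v : R, u * v * c - c * v * u ∈ G := by
    intro c u v
    obtain ⟨g, hg, hgc, hcg'⟩ := absorb c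
    have hcg : c * g = c := by rw [hcg', hgc]
    exact key_mem hn g c hg hgc hcg u v
  have comm_mem : ∀ a b : R, a * b - b * a ∈ G := by
    intro a b
    obtain ⟨g, hg, hgb, hbg'⟩ := absorb b
    have hbg : b * g = b := by rw [hbg', hgb]
    have h := Fkey b a g
    rwa [mul_assoc a g b, hgb, hbg] at h
  have lcomm_mem : ∀ w a b : R, w * (a * b - b * a) ∈ G := by
    intro w a b
    obtain ⟨g, hg, hgw, hwg'⟩ := absorb w
    have hwg : w * g = w := by rw [hwg', hgw]
    have t1 : a * b * w - w * b * a ∈ G := Fkey w a b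
    have t2 : a * b * w - w * (a * b) ∈ G := by
      have h := Fkey w (a * b) g
      rwa [mul_assoc (a * b) g w, hgw, hwg] at h
    have key : w * (a * b - b * a) = (a * b * w - w * b * a) - (a * b * w - w * (a * b)) := by
      noncomm_ring
    rw [key]
    exact G.sub_mem t1 t2
  -- the auxiliary ideal K
  set T : Set R := Sc ∪ {x : R | ∃ w a b : R, x = w * (a * b - b * a)} with hT
  have mul_left_T : ∀ x y : R, y ∈ AddSubgroup.closure T → x * y ∈ AddSubgroup.closure T := by
    intro x y hy
    induction hy using AddSubgroup.closure_induction with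
    | mem z hz =>
      rcases hz with ⟨a, b, rfl⟩ | ⟨w, a, b, rfl⟩
      · exact AddSubgroup.subset_closure (Or.inr ⟨x, a, b, rfl⟩)
      · refine AddSubgroup.subset_closure (Or.inr ⟨x * w, a, b, ?_⟩)
        rw [mul_assoc]
    | zero => rw [mul_zero]; exact AddSubgroup.zero_mem _
    | add u v hu hv ihu ihv => rw [mul_add]; exact AddSubgroup.add_mem _ ihu ihv
    | neg u hu ihu => rw [mul_neg]; exact AddSubgroup.neg_mem _ ihu
  have mul_right_T : ∀ x y : R, x ∈ AddSubgroup.closure T → x * y ∈ AddSubgroup.closure T := by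
    intro x y hx
    induction hx using AddSubgroup.closure_induction with
    | mem z hz =>
      rcases hz with ⟨a, b, rfl⟩ | ⟨w, a, b, rfl⟩
      · have key : (a * b - b * a) * y
            = (a * (b * y) - (b * y) * a) + b * (y * a - a * y) := by noncomm_ring
        rw [key]
        exact AddSubgroup.add_mem _
          (AddSubgroup.subset_closure (Or.inl ⟨a, b * y, rfl⟩))
          (AddSubgroup.subset_closure (Or.inr ⟨b, y, a, rfl⟩))
      · have key : (w * (a * b - b * a)) * y
            = w * (a * (b * y) - (b * y) * a) + (w * b) * (y * a - a * y) := by noncomm_ring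
        rw [key]
        exact AddSubgroup.add_mem _
          (AddSubgroup.subset_closure (Or.inr ⟨w, a, b * y, rfl⟩))
          (AddSubgroup.subset_closure (Or.inr ⟨w * b, y, a, rfl⟩))
    | zero => rw [zero_mul]; exact AddSubgroup.zero_mem _
    | add u v hu hv ihu ihv => rw [add_mul]; exact AddSubgroup.add_mem _ ihu ihv
    | neg u hu ihu => rw [neg_mul]; exact AddSubgroup.neg_mem _ ihu
  set K : TwoSidedIdeal R := TwoSidedIdeal.mk' (↑(AddSubgroup.closure T))
    (AddSubgroup.zero_mem _) (AddSubgroup.add_mem _) (AddSubgroup.neg_mem _)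
    (fun {x y} h => mul_left_T x y h) (fun {x y} h => mul_right_T x y h) with hK
  apply Set.Subset.antisymm
  · -- G ⊆ I
    intro x hx
    have hx' : x ∈ G := hx
    clear hx
    simp only [SetLike.mem_coe]
    induction hx' using AddSubgroup.closure_induction with
    | mem z hz => obtain ⟨l, hl, rfl⟩ := hz; exact mem_span_list l
    | zero => exact TwoSidedIdeal.zero_mem _
    | add u v hu hv ihu ihv => exact TwoSidedIdeal.add_mem _ ihu ihv
    | neg u hu ihu => exact TwoSidedIdeal.neg_mem _ ihu
  · -- I ⊆ G
    intro x hx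
    have hxK : x ∈ K := by
      refine TwoSidedIdeal.mem_span_iff.mp hx K ?_
      intro z hz
      rw [hK, SetLike.mem_coe, TwoSidedIdeal.mem_mk']
      exact AddSubgroup.subset_closure (Or.inl hz)
    rw [hK, TwoSidedIdeal.mem_mk'] at hxK
    have hTG : AddSubgroup.closure T ≤ G := by
      rw [AddSubgroup.closure_le]
      rintro z (⟨a, b, rfl⟩ | ⟨w, a, b, rfl⟩)
      · exact comm_mem a b
      · exact lcomm_mem w a b
    exact hTG hxK
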